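/- arXiv:1105.2244 — 3 statements merged into one kernel-verified Lean document; each statement's English description precedes it below -/
import Mathlib

section
/- Fix $0 \le j \le n-1$ and for each positive integer $t$ define the degree sequence $d^{j,t} \in \mathbb{Z}^{n+1}$ by $d^{j,t}_k = kt$ for $k \le j$ and $d^{j,t}_k = (k-1)t + 1$ for $k > j$. Define $\mathbf{v}_j(d)_\ell = \frac{\prod_{i \ne j}|d_i - d_j|}{\prod_{i \ne \ell}|d_i - d_\ell|}$ for $0 \le \ell \le n$. Then $\lim_{t\to\infty} \mathbf{v}_j(d^{j,t}) = \epsilon_j + \epsilon_{j+1}$ in $\mathbb{Q}^{n+1}$ (coordinatewise, as real limits). -/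
open Filter

/-- The degree sequence `d^{j,t}`: `d_k = kt` for `k ≤ j` and `d_k = (k-1)t + 1` for `k > j`,
realized as a real number. -/
noncomputable def degSeq (j t k : ℕ) : ℝ := if k ≤ j then (k * t : ℕ) else ((k - 1) * t + 1 : ℕ)

/-- The `ℓ`-th coordinate of the normalized Herzog–Kühl vector
`v_j(d)_ℓ = (∏_{i≠j} |d_i - d_j|) / (∏_{i≠ℓ} |d_i - d_ℓ|)`. -/
noncomputable def vCoord (n j ℓ : ℕ) (d : ℕ → ℝ) : ℝ :=
  (∏ i ∈ (Finset.range (n + 1)).erase j, |d i - d j|) /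
    (∏ i ∈ (Finset.range (n + 1)).erase ℓ, |d i - d ℓ|)

/-!
Write `d^{j,t}_k = a_k t + b_k` with slopes `a = (0, 1, …, j, j, j+1, …, n-1)`. Since `d^{j,t}` is
strictly increasing, for `ℓ ≠ j` the factor `|d_ℓ - d_j|` cancels and `v_j(d)_ℓ` becomes the
product over `i ∉ {j, ℓ}` of `|d_i - d_j| / |d_i - d_ℓ|`, a ratio of affine functions of `t`
tending to `|a_i - a_j| / |a_i - a_ℓ|`. The slopes agree only at `j` and `j + 1`, so every limit
factor is `1` when `ℓ = j + 1`, while for other `ℓ` the factor `i = j + 1` vanishes.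
-/

open Finset Topology

theorem tendsto_affine_div_affine_atTop (c₁ e₁ : ℝ) {c₂ : ℝ} (e₂ : ℝ) (hc₂ : c₂ ≠ 0) :
    Tendsto (fun t : ℝ => (c₁ * t + e₁) / (c₂ * t + e₂)) atTop (𝓝 (c₁ / c₂)) := by
  have hlim : Tendsto (fun t : ℝ => (c₁ + e₁ * t⁻¹) / (c₂ + e₂ * t⁻¹)) atTop
      (𝓝 ((c₁ + e₁ * 0) / (c₂ + e₂ * 0))) :=
    ((tendsto_inv_atTop_zero.const_mul e₁).const_add c₁).div
      ((tendsto_inv_atTop_zero.const_mul e₂).const_add c₂) (by simpa using hc₂)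
  simp only [mul_zero, add_zero] at hlim
  refine hlim.congr' ?_
  filter_upwards [eventually_gt_atTop 0] with t ht
  rw [← mul_div_mul_right _ _ ht.ne']
  field_simp

section VCoord

variable {n j ℓ : ℕ} {d : ℕ → ℝ}

theorem vCoord_self (hd : ∀ i ∈ (range (n + 1)).erase j, d i ≠ d j) : vCoord n j j d = 1 :=
  div_self <| prod_ne_zero_iff.mpr fun i hi => abs_ne_zero.mpr (sub_ne_zero.mpr (hd i hi))

theorem vCoord_eq_prod_div (hj : j ≤ n) (hℓ : ℓ ≤ n) (hℓj : ℓ ≠ j) (hd : d ℓ ≠ d j) :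
    vCoord n j ℓ d = ∏ i ∈ ((range (n + 1)).erase j).erase ℓ, |d i - d j| / |d i - d ℓ| := by
  have hℓmem : ℓ ∈ (range (n + 1)).erase j := mem_erase.mpr ⟨hℓj, mem_range.mpr (by omega)⟩
  have hjmem : j ∈ (range (n + 1)).erase ℓ := mem_erase.mpr ⟨hℓj.symm, mem_range.mpr (by omega)⟩
  rw [vCoord, ← mul_prod_erase _ _ hℓmem, ← mul_prod_erase _ _ hjmem, erase_right_comm,
    abs_sub_comm (d j), mul_div_mul_left _ _ (abs_ne_zero.mpr (sub_ne_zero.mpr hd)),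
    prod_div_distrib]

end VCoord

noncomputable def degSlope (j k : ℕ) : ℝ := if k ≤ j then k else k - 1

noncomputable def degOffset (j k : ℕ) : ℝ := if k ≤ j then 0 else 1

theorem degSeq_eq_slope_mul_add (j t k : ℕ) : degSeq j t k = degSlope j k * t + degOffset j k := by
  unfold degSeq degSlope degOffset
  split_ifs with hk
  · push_cast; ring
  · push_cast [Nat.cast_sub (show 1 ≤ k by omega)]; ring

theorem strictMono_degSeq {j t : ℕ} (ht : 1 ≤ t) : StrictMono (degSeq j t) := by
  refine strictMono_nat_of_lt_succ fun k => ?_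
  unfold degSeq
  split_ifs with h₁ h₂ h₂ <;> simp only [Nat.cast_lt, Nat.add_sub_cancel]
  · exact Nat.mul_lt_mul_of_pos_right (Nat.lt_succ_self k) ht
  · omega
  · omega
  · obtain ⟨m, rfl⟩ : ∃ m, k = m + 1 := ⟨k - 1, by omega⟩
    rw [Nat.add_sub_cancel, Nat.succ_mul]
    omega

theorem degSlope_succ_self (j : ℕ) : degSlope j (j + 1) = degSlope j j := by
  simp [degSlope]

theorem degSlope_injOn (j : ℕ) : Set.InjOn (degSlope j) {j}ᶜ := by
  intro i hi k hk h
  simp only [Set.mem_compl_iff, Set.mem_singleton_iff] at hi hk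
  unfold degSlope at h
  split_ifs at h with h₁ h₂ h₂
  · exact_mod_cast h
  · have : i + 1 = k := by exact_mod_cast (by linarith : (i : ℝ) + 1 = k)
    omega
  · have : i = k + 1 := by exact_mod_cast (by linarith : (i : ℝ) = k + 1)
    omega
  · exact_mod_cast (by linarith : (i : ℝ) = k)

section DegSeq

variable {j : ℕ}

theorem tendsto_abs_degSeq_sub_div_abs_degSeq_sub {i k ℓ : ℕ} (h : degSlope j i ≠ degSlope j ℓ) :
    Tendsto (fun t : ℕ => |degSeq j t i - degSeq j t k| / |degSeq j t i - degSeq j t ℓ|) atTop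
      (𝓝 (|degSlope j i - degSlope j k| / |degSlope j i - degSlope j ℓ|)) := by
  have hlim := ((tendsto_affine_div_affine_atTop (degSlope j i - degSlope j k)
    (degOffset j i - degOffset j k) (degOffset j i - degOffset j ℓ)
    (sub_ne_zero.mpr h)).abs).comp tendsto_natCast_atTop_atTop
  rw [abs_div] at hlim
  refine hlim.congr fun t => ?_
  simp only [Function.comp_apply, degSeq_eq_slope_mul_add, abs_div]
  ring_nf

theorem prod_abs_degSlope_sub_div {n ℓ : ℕ} (hj : j + 1 ≤ n) (hℓj : ℓ ≠ j) :
    ∏ i ∈ ((range (n + 1)).erase j).erase ℓ,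
        |degSlope j i - degSlope j j| / |degSlope j i - degSlope j ℓ| =
      if ℓ = j + 1 then 1 else 0 := by
  split_ifs with hℓ
  · subst hℓ
    refine prod_eq_one fun i hi => ?_
    have hslope := (degSlope_injOn j).ne (ne_of_mem_erase (mem_of_mem_erase hi))
      (Nat.succ_ne_self j) (ne_of_mem_erase hi)
    rw [degSlope_succ_self] at hslope ⊢
    exact div_self (abs_ne_zero.mpr (sub_ne_zero.mpr hslope))
  · refine prod_eq_zero (i := j + 1) ?_ (by simp [degSlope_succ_self])
    simp only [mem_erase, mem_range]
    omega

end DegSeq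

/-- For fixed `0 ≤ j ≤ n-1`, as `t → ∞` the vectors `v_j(d^{j,t})` converge coordinatewise
to `ρ_j = ε_j + ε_{j+1}`. -/
theorem stmt4 (n j : ℕ) (hj : j + 1 ≤ n) (ℓ : ℕ) (hℓ : ℓ ≤ n) :
    Tendsto (fun t : ℕ => vCoord n j ℓ (degSeq j t)) atTop
      (nhds (if ℓ = j ∨ ℓ = j + 1 then 1 else 0)) := by
  by_cases hℓj : ℓ = j
  · subst hℓj
    rw [if_pos (Or.inl rfl)]
    refine tendsto_const_nhds.congr' ?_
    filter_upwards [eventually_ge_atTop 1] with t ht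
    exact (vCoord_self fun i hi => (strictMono_degSeq ht).injective.ne (ne_of_mem_erase hi)).symm
  · simp only [hℓj, false_or, ← prod_abs_degSlope_sub_div hj hℓj]
    refine (tendsto_finsetProd _ fun i hi =>
      tendsto_abs_degSeq_sub_div_abs_degSeq_sub ?_).congr' ?_
    · exact (degSlope_injOn j).ne (ne_of_mem_erase (mem_of_mem_erase hi)) hℓj (ne_of_mem_erase hi)
    · filter_upwards [eventually_ge_atTop 1] with t ht
      exact (vCoord_eq_prod_div (by omega) hℓ hℓj ((strictMono_degSeq ht).injective.ne hℓj)).symm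
end

section
/- Let $n \ge 1$. A vector $\mathbf{w} \in \mathbb{W} = \prod_{i \ge 0}\mathbb{Q}$ lies in the cone spanned over $\mathbb{Q}_{\ge 0}$ by $\rho_{-1}, \rho_0, \dots, \rho_{n-2}, \tau^\infty_{n-2}, \tau^\infty_{n-1}$ if and only if: $\chi_{[i,j]}(\mathbf{w}) \ge 0$ for all $i \le j \le n$ with $j - i$ even; $\chi_{[i,i+1]}(\mathbf{w}) = 0$ for all $i \ge n$; and $\chi_{[n-1,n]}(\mathbf{w}) \ge 0$. -/
/-!
A nonnegative combination is constant from coordinate `n` on, and its `χ_{[n-1,n]}` is the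
coefficient of `ρ_{n-2}` (of `ρ_{-1}` when `n = 1`). The conditions `χ_{[i,j]} ≥ 0` with `j - i`
even cut out a convex cone containing `ε_0`, every `ρ_m` and every nonnegative monotone vector, in
particular every `τ^∞_m`.

Conversely, `w` is constant from `n` on, and back-substitution determines the coefficients up to
the coefficient `a` of `τ^∞_{n-2}`: the coefficient of `ρ_{i-1}` is `χ_{[i,n]}(w) - (-1)^{n-i} a`
for `i ≤ n - 2`, that of `ρ_{n-2}` is `χ_{[n-1,n]}(w)`, and that of `τ^∞_{n-1}` is `w_n - a`.
They are nonnegative as soon as `0 ≤ a` and `(-1)^{n-i} a ≤ χ_{[i,n]}(w)` for all `i ≤ n`, and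
such an `a` exists: for `i < j` with `j - i` odd, `χ_{[i,n]}(w) + χ_{[j,n]}(w) = χ_{[i,j-1]}(w) ≥ 0`,
so every lower bound `-χ_{[i,n]}(w)` (with `n - i` odd) lies below every upper bound
`χ_{[j,n]}(w)` (with `n - j` even).
-/

def eps (i : ℕ) : ℕ → ℚ := fun k => if k = i then 1 else 0

def rho (i : ℕ) : ℕ → ℚ := eps i + eps (i + 1)

def tauInf (i : ℕ) : ℕ → ℚ := fun k => if i ≤ k then 1 else 0

def chi (i j : ℕ) (w : ℕ → ℚ) : ℚ := ∑ ℓ ∈ Finset.Icc i j, (-1 : ℚ) ^ (ℓ - i) * w ℓ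

@[simp]
lemma chi_self (i : ℕ) (w : ℕ → ℚ) : chi i i w = w i := by simp [chi]

lemma chi_add (i j : ℕ) (u v : ℕ → ℚ) : chi i j (u + v) = chi i j u + chi i j v := by
  simp [chi, mul_add, Finset.sum_add_distrib]

lemma chi_smul (i j : ℕ) (c : ℚ) (u : ℕ → ℚ) : chi i j (c • u) = c * chi i j u := by
  simp [chi, Finset.mul_sum, mul_left_comm]

lemma chi_split {p q r : ℕ} (hpq : p < q) (hqr : q ≤ r + 1) (w : ℕ → ℚ) :
    chi p r w = chi p (q - 1) w + (-1) ^ (q - p) * chi q r w := by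
  simp only [chi, ← Finset.Ico_add_one_right_eq_Icc, Nat.sub_add_cancel (by omega : 1 ≤ q),
    Finset.mul_sum]
  rw [← Finset.sum_Ico_consecutive _ hpq.le hqr]
  congr 1
  refine Finset.sum_congr rfl fun ℓ hℓ => ?_
  rw [Finset.mem_Ico] at hℓ
  rw [← mul_assoc, ← pow_add, add_comm, Nat.sub_add_sub_cancel hℓ.1 hpq.le]

lemma chi_eq_sub_chi_succ {i j : ℕ} (hij : i < j) (w : ℕ → ℚ) : chi i j w = w i - chi (i + 1) j w := by
  rw [chi_split (Nat.lt_add_one i) (by omega), Nat.add_sub_cancel, Nat.add_sub_cancel_left]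
  simp [sub_eq_add_neg]

lemma chi_succ_self (i : ℕ) (w : ℕ → ℚ) : chi i (i + 1) w = w i - w (i + 1) := by
  simp [chi_eq_sub_chi_succ (Nat.lt_add_one i)]

lemma chi_add_chi_of_odd {p q r : ℕ} (hpq : p < q) (hqr : q ≤ r + 1) (hodd : Odd (q - p))
    (w : ℕ → ℚ) : chi p r w + chi q r w = chi p (q - 1) w := by
  rw [chi_split hpq hqr, hodd.neg_one_pow]
  ring

lemma chi_eps (i j t : ℕ) :
    chi i j (eps t) = if i ≤ t ∧ t ≤ j then (-1) ^ (t - i) else 0 := by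
  simp [chi, eps, Finset.mem_Icc]

lemma chi_nonneg_of_monotone {w : ℕ → ℚ} (hw : Monotone w) {i j : ℕ} (hi : 0 ≤ w i) (hij : i ≤ j)
    (heven : Even (j - i)) : 0 ≤ chi i j w := by
  obtain ⟨k, hk⟩ := heven
  obtain rfl : j = i + 2 * k := by omega
  induction k with
  | zero => simpa using hi
  | succ k ih =>
    rw [show i + 2 * (k + 1) = i + 2 * k + 1 + 1 by ring]
    have hstep := chi_split (p := i) (q := i + 2 * k + 1) (r := i + 2 * k + 1 + 1) (by omega)
      (by omega) w
    rw [Nat.add_sub_cancel, chi_succ_self, show i + 2 * k + 1 - i = 2 * k + 1 by omega,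
      (odd_two_mul_add_one k).neg_one_pow] at hstep
    have hmono : w (i + 2 * k + 1) ≤ w (i + 2 * k + 1 + 1) := hw (by omega)
    linarith [ih (by omega) (by omega)]

def evenChiCone : PointedCone ℚ (ℕ → ℚ) where
  carrier := {w | ∀ i j, i ≤ j → Even (j - i) → 0 ≤ chi i j w}
  add_mem' hu hv i j hij heven := by
    rw [chi_add]
    exact add_nonneg (hu i j hij heven) (hv i j hij heven)
  zero_mem' i j _ _ := by simp [chi]
  smul_mem' c w hw i j hij heven := by
    rw [Nonneg.mk_smul, chi_smul]
    exact mul_nonneg c.2 (hw i j hij heven)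

lemma eps_zero_mem_evenChiCone : eps 0 ∈ evenChiCone := by
  intro i j _ _
  rw [chi_eps]
  split_ifs with h
  · simp [show i = 0 by omega]
  · rfl

lemma rho_mem_evenChiCone (m : ℕ) : rho m ∈ evenChiCone := by
  intro i j hij heven
  rw [rho, chi_add, chi_eps, chi_eps]
  split_ifs with h1 h2 h2
  · rw [show m + 1 - i = m - i + 1 by omega, pow_succ]
    simp
  · rw [show m = j by omega, heven.neg_one_pow]
    simp
  · simp [show m + 1 - i = 0 by omega]
  · simp

lemma tauInf_mem_evenChiCone (m : ℕ) : tauInf m ∈ evenChiCone := by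
  intro i j hij heven
  refine chi_nonneg_of_monotone (fun k l hkl => ?_) ?_ hij heven <;>
    simp only [tauInf] <;> split_ifs <;> first | omega | norm_num

lemma sum_smul_rho_apply (N : ℕ) (c : ℕ → ℚ) (k : ℕ) :
    (∑ i ∈ Finset.range N, c (i + 1) • rho i) k
      = (if k < N then c (k + 1) else 0) + (if 0 < k ∧ k ≤ N then c k else 0) := by
  simp only [Finset.sum_apply, Pi.smul_apply, smul_eq_mul, rho, eps, Pi.add_apply, mul_add,
    mul_ite, mul_one, mul_zero, Finset.sum_add_distrib, Finset.sum_ite_eq, Finset.mem_range]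
  congr 1
  rcases k with _ | k
  · simp
  · simp [Finset.mem_range]

def coneCombination (n : ℕ) (c : ℕ → ℚ) : ℕ → ℚ :=
  c 0 • eps 0 + ∑ i ∈ Finset.range (n - 1), c (i + 1) • rho i
    + c n • tauInf (n - 2) + c (n + 1) • tauInf (n - 1)

lemma coneCombination_apply (n : ℕ) (c : ℕ → ℚ) (k : ℕ) :
    coneCombination n c k = (if k = 0 then c 0 else 0)
      + ((if k < n - 1 then c (k + 1) else 0) + (if 0 < k ∧ k ≤ n - 1 then c k else 0))
      + (if n - 2 ≤ k then c n else 0) + (if n - 1 ≤ k then c (n + 1) else 0) := by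
  simp only [coneCombination, Pi.add_apply, sum_smul_rho_apply, Pi.smul_apply, smul_eq_mul, eps,
    tauInf, mul_ite, mul_one, mul_zero]

lemma coneCombination_mem_evenChiCone (n : ℕ) {c : ℕ → ℚ} (hc : ∀ i, 0 ≤ c i) :
    coneCombination n c ∈ evenChiCone := by
  have hsmul : ∀ {v} (i : ℕ), v ∈ evenChiCone → c i • v ∈ evenChiCone :=
    fun i hv => evenChiCone.smul_mem (hc i) hv
  exact add_mem (add_mem (add_mem (hsmul 0 eps_zero_mem_evenChiCone)
    (sum_mem fun i _ => hsmul (i + 1) (rho_mem_evenChiCone i)))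
    (hsmul n (tauInf_mem_evenChiCone _))) (hsmul (n + 1) (tauInf_mem_evenChiCone _))

section Coordinates

variable {n : ℕ} (c : ℕ → ℚ)

lemma coneCombination_of_le (hn : 1 ≤ n) {k : ℕ} (hk : n ≤ k) :
    coneCombination n c k = c n + c (n + 1) := by
  rw [coneCombination_apply]
  split_ifs <;> first | omega | ring

lemma coneCombination_sub_one (hn : 1 ≤ n) :
    coneCombination n c (n - 1) = c (n - 1) + c n + c (n + 1) := by
  obtain ⟨m, rfl⟩ : ∃ m, n = m + 1 := ⟨n - 1, by omega⟩
  rw [coneCombination_apply, Nat.add_sub_cancel]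
  split_ifs <;> first | omega | (subst_vars; ring)

lemma coneCombination_of_add_two_le {k : ℕ} (hk : k + 2 ≤ n) :
    coneCombination n c k = c k + c (k + 1) + if k + 2 = n then c n else 0 := by
  rw [coneCombination_apply]
  split_ifs <;> first | omega | (subst_vars; ring)

lemma chi_succ_coneCombination_of_le (hn : 1 ≤ n) {k : ℕ} (hk : n ≤ k) :
    chi k (k + 1) (coneCombination n c) = 0 := by
  rw [chi_succ_self, coneCombination_of_le c hn hk, coneCombination_of_le c hn (by omega), sub_self]

lemma chi_sub_one_coneCombination (hn : 1 ≤ n) :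
    chi (n - 1) n (coneCombination n c) = c (n - 1) := by
  have h := chi_succ_self (n - 1) (coneCombination n c)
  rw [Nat.sub_add_cancel hn, coneCombination_sub_one c hn, coneCombination_of_le c hn le_rfl] at h
  rw [h]
  ring

end Coordinates

section Construction

variable {n : ℕ} {w : ℕ → ℚ}

lemma eq_of_chi_succ_eq_zero (h : ∀ i, n ≤ i → chi i (i + 1) w = 0) {k : ℕ} (hk : n ≤ k) :
    w k = w n := by
  induction k, hk using Nat.le_induction with
  | base => rfl
  | succ k hk ih => linarith [chi_succ_self k w, h k hk]

lemma exists_signed_bound (H : ∀ i j, i ≤ j → j ≤ n → Even (j - i) → 0 ≤ chi i j w) :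
    ∃ a : ℚ, 0 ≤ a ∧ ∀ i ≤ n, (-1) ^ (n - i) * a ≤ chi i n w := by
  set E := (Finset.range (n + 1)).filter (fun i => Even (n - i))
  have hE : ∀ {i}, i ∈ E ↔ i ≤ n ∧ Even (n - i) := by simp [E]
  have hEne : E.Nonempty := ⟨n, hE.2 ⟨le_rfl, by simp⟩⟩
  refine ⟨E.inf' hEne (chi · n w), Finset.le_inf' _ _ fun j hj => H j n (hE.1 hj).1 le_rfl
    (hE.1 hj).2, fun i hi => ?_⟩
  rcases Nat.even_or_odd (n - i) with hi_even | hi_odd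
  · rw [hi_even.neg_one_pow, one_mul]
    exact Finset.inf'_le _ (hE.2 ⟨hi, hi_even⟩)
  · rw [hi_odd.neg_one_pow, neg_one_mul, neg_le]
    refine Finset.le_inf' _ _ fun j hj => ?_
    obtain ⟨hj, hj_even⟩ := hE.1 hj
    rw [neg_le_iff_add_nonneg]
    rcases lt_or_gt_of_ne (show i ≠ j by rintro rfl; exact Nat.not_even_iff_odd.2 hi_odd hj_even)
      with hij | hji
    · rw [add_comm, chi_add_chi_of_odd hij (by omega) (by grind)]
      exact H i (j - 1) (by omega) (by omega) (by grind)
    · rw [chi_add_chi_of_odd hji (by omega) (by grind)]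
      exact H j (i - 1) (by omega) (by omega) (by grind)

def coneCoeff (n : ℕ) (w : ℕ → ℚ) (a : ℚ) (i : ℕ) : ℚ :=
  if i + 1 < n then chi i n w - (-1) ^ (n - i) * a
  else if i + 1 = n then chi i n w
  else if i = n then a
  else w n - a

section

variable (n w) (a : ℚ)

lemma coneCoeff_of_add_one_lt {i : ℕ} (hi : i + 1 < n) :
    coneCoeff n w a i = chi i n w - (-1) ^ (n - i) * a := if_pos hi

lemma coneCoeff_sub_one (hn : 1 ≤ n) : coneCoeff n w a (n - 1) = chi (n - 1) n w := by
  simp [coneCoeff, Nat.sub_add_cancel hn]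

lemma coneCoeff_self : coneCoeff n w a n = a := by simp [coneCoeff]

lemma coneCoeff_add_one : coneCoeff n w a (n + 1) = w n - a := by
  simp [coneCoeff, show ¬ n + 1 + 1 < n by omega, show n + 1 + 1 ≠ n by omega]

end

lemma coneCoeff_nonneg {a : ℚ} (hlast : 0 ≤ chi (n - 1) n w) (ha : 0 ≤ a)
    (hbound : ∀ i ≤ n, (-1) ^ (n - i) * a ≤ chi i n w) (i : ℕ) : 0 ≤ coneCoeff n w a i := by
  unfold coneCoeff
  split_ifs with h1 h2 h3
  · exact sub_nonneg.2 (hbound i (by omega))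
  · rwa [show i = n - 1 by omega]
  · exact ha
  · simpa using hbound n le_rfl

lemma coneCombination_coneCoeff (hn : 1 ≤ n) (hconst : ∀ k, n ≤ k → w k = w n) (a : ℚ) :
    coneCombination n (coneCoeff n w a) = w := by
  funext k
  rcases le_or_gt n k with hk | hk
  · rw [coneCombination_of_le _ hn hk, hconst k hk, coneCoeff_self, coneCoeff_add_one]
    ring
  obtain rfl | hk : k = n - 1 ∨ k + 2 ≤ n := by omega
  · have h := chi_succ_self (n - 1) w
    rw [Nat.sub_add_cancel hn] at h
    rw [coneCombination_sub_one _ hn, coneCoeff_sub_one _ _ _ hn, coneCoeff_self,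
      coneCoeff_add_one, h]
    ring
  rw [coneCombination_of_add_two_le _ hk, coneCoeff_of_add_one_lt _ _ _ (by omega),
    chi_eq_sub_chi_succ (by omega : k < n) w]
  obtain hk' | hk' := hk.eq_or_lt
  · rw [if_pos hk', ← hk', coneCoeff_self, show k + 1 = k + 2 - 1 by omega,
      coneCoeff_sub_one _ _ _ (by omega), show k + 2 - k = 2 by omega]
    ring
  · rw [if_neg hk'.ne, coneCoeff_of_add_one_lt _ _ _ hk', show n - k = n - (k + 1) + 1 by omega,
      pow_succ]
    ring

end Construction

/-- A vector `w ∈ 𝕎 = ∏_{i≥0} ℚ` lies in the cone spanned over `ℚ_{≥0}` by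
`ρ_{-1}, ρ_0, …, ρ_{n-2}, τ^∞_{n-2}, τ^∞_{n-1}` iff `χ_{[i,j]}(w) ≥ 0` for all
`i ≤ j ≤ n` with `j - i` even, `χ_{[i,i+1]}(w) = 0` for all `i ≥ n`, and
`χ_{[n-1,n]}(w) ≥ 0`. -/
theorem stmt11 (n : ℕ) (hn : 1 ≤ n) (w : ℕ → ℚ) :
    (∃ c : ℕ → ℚ, (∀ i, 0 ≤ c i) ∧
        w = c 0 • eps 0 + ∑ i ∈ Finset.range (n - 1), c (i + 1) • rho i
              + c n • tauInf (n - 2) + c (n + 1) • tauInf (n - 1)) ↔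
      ((∀ i j, i ≤ j → j ≤ n → Even (j - i) → 0 ≤ chi i j w) ∧
        (∀ i, n ≤ i → chi i (i + 1) w = 0) ∧
        0 ≤ chi (n - 1) n w) := by
  constructor
  · rintro ⟨c, hc, hw⟩
    change w = coneCombination n c at hw
    subst hw
    refine ⟨fun i j hij _ heven => coneCombination_mem_evenChiCone n hc i j hij heven,
      fun i hi => chi_succ_coneCombination_of_le c hn hi, ?_⟩
    rw [chi_sub_one_coneCombination c hn]
    exact hc (n - 1)
  · rintro ⟨heven, hsucc, hlast⟩
    obtain ⟨a, ha, hbound⟩ := exists_signed_bound heven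
    exact ⟨coneCoeff n w a, coneCoeff_nonneg hlast ha hbound,
      (coneCombination_coneCoeff hn (fun _ => eq_of_chi_succ_eq_zero hsucc) a).symm⟩
end

section
/- Let $n \ge 4$ be even. Then for every rational $\delta$ with $0 < \delta < 1$, the vector $\mathbf{v} = (1, 1+\frac{\delta}{2}, \delta, \delta, \dots, \delta, 1+\frac{\delta}{2}, 1) \in \mathbb{Q}^{n+1}$ (with $v_0 = v_n = 1$, $v_1 = v_{n-1} = 1 + \frac{\delta}{2}$, and $v_i = \delta$ for $2 \le i \le n-2$) lies in the cone spanned by $\epsilon_0$ and $\epsilon_i + \epsilon_{i+1}$ ($0 \le i \le n-1$) with all coefficients of $\epsilon_i+\epsilon_{i+1}$ strictly positive. -/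
/-- The vector `(1, 1+δ/2, δ, …, δ, 1+δ/2, 1) ∈ ℚ^{n+1}`. -/
def pathological (n : ℕ) (δ : ℚ) : ℕ → ℚ := fun k =>
  if k = 0 ∨ k = n then 1
  else if k = 1 ∨ k = n - 1 then 1 + δ / 2
  else δ

/-- For `n ≥ 4` even and any rational `0 < δ < 1`, the vector
`v = (1, 1+δ/2, δ, …, δ, 1+δ/2, 1)` lies in the cone spanned by `ε₀` and
`ρ_i = ε_i + ε_{i+1}` (`0 ≤ i ≤ n-1`) with all coefficients of the `ρ_i` strictly positive.
(Hence, by Theorem 1.1, it is up to scalar the Betti sequence of a finite length module,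
so no linear lower bound `b_i ≥ B_i(b_0, b_n)` can hold for `2 ≤ i ≤ n-2`.) -/
theorem stmt17 (n : ℕ) (hn : 4 ≤ n) (hne : Even n) (δ : ℚ) (h0 : 0 < δ) (h1 : δ < 1) :
    ∃ (c : ℚ) (a : ℕ → ℚ), 0 ≤ c ∧ (∀ i, i < n → 0 < a i) ∧
      ∀ k ≤ n, pathological n δ k
        = c * eps 0 k + ∑ i ∈ Finset.range n, a i * rho i k := by
  refine ⟨0, fun i => if i = 0 ∨ i = n - 1 then (1 : ℚ) else δ / 2, le_refl 0,
    fun i hi => ?_, fun k hk => ?_⟩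
  · dsimp only; split
    · norm_num
    · positivity
  · have h1' : ∑ i ∈ Finset.range n,
        (if i = 0 ∨ i = n - 1 then (1 : ℚ) else δ / 2) * eps i k
        = if k < n then (if k = 0 ∨ k = n - 1 then (1 : ℚ) else δ / 2) else 0 := by
      simp only [eps, mul_ite, mul_one, mul_zero]
      rw [Finset.sum_ite_eq]
      simp [Finset.mem_range]
    have h2' : ∑ i ∈ Finset.range n,
        (if i = 0 ∨ i = n - 1 then (1 : ℚ) else δ / 2) * eps (i + 1) k
        = if 1 ≤ k ∧ k - 1 < n then
            (if k - 1 = 0 ∨ k - 1 = n - 1 then (1 : ℚ) else δ / 2) else 0 := by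
      cases k with
      | zero => simp [eps]
      | succ m =>
        simp only [eps, mul_ite, mul_one, mul_zero, Nat.add_right_cancel_iff]
        rw [Finset.sum_ite_eq]
        simp [Finset.mem_range]
    simp only [rho, Pi.add_apply, mul_add, Finset.sum_add_distrib, h1', h2',
      pathological, zero_mul, zero_add]
    split_ifs <;> first | ring1 | (exfalso; omega)
end
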